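/- If G is a chordal graph, then every induced subgraph of G is chordal and hence (if nonempty) has a simplicial vertex. -/

import Mathlib

/-- A graph is chordal if every cycle of length at least 4 has a chord. -/
def SimpleGraph.IsChordal {V : Type*} (G : SimpleGraph V) : Prop :=
  ∀ ⦃v : V⦄ (w : G.Walk v v), w.IsCycle → 4 ≤ w.length →
    ∃ x y, x ∈ w.support ∧ y ∈ w.support ∧ G.Adj x y ∧ ¬ w.toSubgraph.Adj x y

/-!
A cycle of an induced subgraph is a cycle of the whole graph with the same chords, so
chordality passes to induced subgraphs.

For simplicial vertices we prove, by induction on the vertex set, that for every vertex `v`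
not adjacent to all others some simplicial vertex is not adjacent to `v`. Let `C` be a
connected component of the graph minus the closed neighbourhood of `v`. Every vertex of the
boundary `S` of `C` is adjacent to `v`, and any two boundary vertices `x`, `y` are adjacent:
otherwise a shortest `x`–`y` path through `C`, closed up through `v`, would be a chordless
cycle of length at least 4. Now apply induction to `C ∪ S`, which misses `v`. If it is a
clique, every vertex of `C` is simplicial. Otherwise it has two non-adjacent simplicial
vertices; since `S` is a clique, one of them lies in `C`, and all its neighbours lie in `C ∪ S`.
-/

namespace SimpleGraph

variable {V : Type*} {G : SimpleGraph V}

theorem IsChordal.comap {W : Type*} {H : SimpleGraph W} (f : H ↪g G) (hG : G.IsChordal) :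
    H.IsChordal := by
  intro v w hw hlen
  obtain ⟨a, b, ha, hb, hab, hchord⟩ :=
    hG (w.map f.toHom) (hw.map f.injective) (by rwa [Walk.length_map])
  rw [Walk.support_map, List.mem_map] at ha hb
  obtain ⟨a, ha, rfl⟩ := ha
  obtain ⟨b, hb, rfl⟩ := hb
  refine ⟨a, b, ha, hb, f.map_adj_iff.mp hab, fun hw' => hchord ?_⟩
  rw [← Subgraph.mem_edgeSet, Walk.mem_edges_toSubgraph] at hw' ⊢
  rw [Walk.edges_map]
  exact List.mem_map_of_mem hw'

theorem Walk.eq_of_adj_of_mem_support_of_length_eq_dist [DecidableEq V] {u w v b : V}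
    (h : G.Adj u w) (q : G.Walk w v) (hp : (q.cons h).length = G.dist u v)
    (hb : b ∈ q.support) (hub : G.Adj u b) : b = w := by
  have hsplit : (q.takeUntil b hb).length + (q.dropUntil b hb).length = q.length := by
    rw [← Walk.length_append, q.take_spec hb]
  have hshort : G.dist u v ≤ ((q.dropUntil b hb).cons hub).length := dist_le _
  rw [Walk.length_cons] at hp hshort
  exact (Walk.eq_of_length_eq_zero (p := q.takeUntil b hb) (by omega)).symm

theorem Walk.isChordless_of_length_eq_dist {u v : V} (p : G.Walk u v)
    (hp : p.length = G.dist u v) : p.IsChordless := by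
  classical
  rw [isChordless_iff_forall_mem_edges]
  induction p with
  | nil => simp
  | @cons u w v h q ih =>
    have hq := ih (length_eq_dist_of_subwalk hp (q.isSubwalk_cons h))
    intro a b ha hb hab
    rw [support_cons, List.mem_cons] at ha hb
    rw [edges_cons, List.mem_cons]
    rcases ha with rfl | ha <;> rcases hb with rfl | hb
    · exact (hab.ne rfl).elim
    · exact .inl (by rw [q.eq_of_adj_of_mem_support_of_length_eq_dist h hp hb hab])
    · exact .inl (by
        rw [Sym2.eq_swap, q.eq_of_adj_of_mem_support_of_length_eq_dist h hp ha hab.symm])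
    · exact .inr (hq ha hb hab)

theorem Walk.IsChordless.map {V' : Type*} {G' : SimpleGraph V'} (f : G ↪g G') {u v : V}
    {p : G.Walk u v} (hp : p.IsChordless) : (p.map f.toHom).IsChordless := by
  rw [isChordless_iff_forall_mem_edges] at hp ⊢
  intro a b ha hb hab
  rw [support_map, List.mem_map] at ha hb
  obtain ⟨a, ha, rfl⟩ := ha
  obtain ⟨b, hb, rfl⟩ := hb
  rw [edges_map]
  exact List.mem_map_of_mem (hp ha hb (f.map_adj_iff.mp hab))

theorem Walk.exists_isPath_isChordless_support_subset {u v : V} (p : G.Walk u v) :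
    ∃ q : G.Walk u v, q.IsPath ∧ q.IsChordless ∧ q.support ⊆ p.support := by
  let f := Embedding.induce (G := G) {x | x ∈ p.support}
  obtain ⟨q, hq, hqd⟩ :=
    (p.induce {x | x ∈ p.support} fun _ hx => hx).reachable.exists_path_of_dist
  have hsupp : (q.map f.toHom).support ⊆ p.support := by
    intro x hx
    rw [support_map, List.mem_map] at hx
    obtain ⟨x, -, rfl⟩ := hx
    exact x.2
  exact ⟨_, hq.map f.injective, (q.isChordless_of_length_eq_dist hqd).map f, hsupp⟩

theorem IsChordal.adj_of_walk_avoiding (hG : G.IsChordal) {v x y : V} (hvx : G.Adj v x)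
    (hvy : G.Adj v y) (hxy : x ≠ y) (p : G.Walk x y)
    (hp : ∀ u ∈ p.support, u ≠ v ∧ (G.Adj v u → u = x ∨ u = y)) : G.Adj x y := by
  by_contra hnxy
  obtain ⟨q, hq, hqc, hqp⟩ := p.exists_isPath_isChordless_support_subset
  have hvq : v ∉ q.support := fun h => (hp v (hqp h)).1 rfl
  have hlen : 2 ≤ q.length := by
    by_contra! h
    interval_cases hl : q.length
    · exact hxy (Walk.eq_of_length_eq_zero hl)
    · exact hnxy (Walk.adj_of_length_eq_one hl)
  let c : G.Walk v v := (q.concat hvy.symm).cons hvx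
  have hc : c.IsCycle := by
    refine (Walk.cons_isCycle_iff _ _).mpr ⟨hq.concat hvq _, ?_⟩
    rw [Walk.edges_concat, List.concat_eq_append, List.mem_append, not_or]
    exact ⟨fun h => hvq (q.fst_mem_support_of_mem_edges h), by simp [hxy, hvy.ne]⟩
  have hc4 : 4 ≤ c.length := by simp [c]; omega
  obtain ⟨a, b, ha, hb, hab, hchord⟩ := hG c hc hc4
  have hcv : ∀ b ∈ c.support, G.Adj v b → s(v, b) ∈ c.edges := by
    intro b hb hvb
    have hbq : b ∈ q.support := by simpa [c, hvb.ne'] using hb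
    rcases (hp b (hqp hbq)).2 hvb with rfl | rfl <;> simp [c]
  have hcq : ∀ a ∈ c.support, a ≠ v → a ∈ q.support := by
    intro a ha hav
    simpa [c, hav] using ha
  apply hchord
  rw [← Subgraph.mem_edgeSet, Walk.mem_edges_toSubgraph]
  by_cases hav : a = v
  · subst hav; exact hcv b hb hab
  by_cases hbv : b = v
  · subst hbv; rw [Sym2.eq_swap]; exact hcv a ha hab.symm
  have hq_sub : q.edges ⊆ c.edges := by simp [c]
  exact hq_sub (hqc.mem_edges (hcq a ha hav) (hcq b hb hbv) hab)

variable (G) in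
def componentIn (D : Set V) (c : V) : Set V :=
  {u | ∃ p : G.Walk c u, ∀ w ∈ p.support, w ∈ D}

section componentIn

variable {D : Set V} {c u w : V}

theorem self_mem_componentIn (hc : c ∈ D) : c ∈ G.componentIn D c :=
  ⟨.nil, by simpa using hc⟩

theorem componentIn_subset : G.componentIn D c ⊆ D :=
  fun _ ⟨p, hp⟩ => hp _ p.end_mem_support

theorem mem_componentIn_of_adj (hu : u ∈ G.componentIn D c) (hw : w ∈ D) (huw : G.Adj u w) :
    w ∈ G.componentIn D c := by
  obtain ⟨p, hp⟩ := hu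
  refine ⟨p.concat huw, fun x hx => ?_⟩
  rw [Walk.support_concat, List.mem_append, List.mem_singleton] at hx
  exact hx.elim (hp x) (· ▸ hw)

theorem exists_walk_of_mem_componentIn (hu : u ∈ G.componentIn D c)
    (hw : w ∈ G.componentIn D c) : ∃ p : G.Walk u w, ∀ x ∈ p.support, x ∈ D := by
  obtain ⟨p, hp⟩ := hu
  obtain ⟨q, hq⟩ := hw
  refine ⟨p.reverse.append q, fun x hx => ?_⟩
  rw [Walk.mem_support_append_iff, Walk.support_reverse, List.mem_reverse] at hx
  exact hx.elim (hp x) (hq x)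

end componentIn

theorem adj_of_adj_of_notMem_componentIn {s : Set V} {v c u x : V}
    (hu : u ∈ G.componentIn {w | w ∈ s ∧ w ≠ v ∧ ¬ G.Adj v w} c) (hx : x ∈ s)
    (hxC : x ∉ G.componentIn {w | w ∈ s ∧ w ≠ v ∧ ¬ G.Adj v w} c) (hux : G.Adj u x) :
    G.Adj v x := by
  have hvu : ¬ G.Adj v u := (componentIn_subset hu).2.2
  by_contra hvx
  refine hxC (mem_componentIn_of_adj hu ⟨hx, ?_, hvx⟩ hux)
  rintro rfl
  exact hvu hux.symm

theorem IsChordal.adj_of_adj_componentIn (hG : G.IsChordal) {D : Set V} {v c x y u₁ u₂ : V}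
    (hD : ∀ w ∈ D, w ≠ v ∧ ¬ G.Adj v w) (hvx : G.Adj v x) (hvy : G.Adj v y) (hxy : x ≠ y)
    (hu₁ : u₁ ∈ G.componentIn D c) (hu₂ : u₂ ∈ G.componentIn D c)
    (hxu₁ : G.Adj x u₁) (hyu₂ : G.Adj y u₂) : G.Adj x y := by
  obtain ⟨p, hp⟩ := exists_walk_of_mem_componentIn hu₁ hu₂
  refine hG.adj_of_walk_avoiding hvx hvy hxy ((p.concat hyu₂.symm).cons hxu₁) fun w hw => ?_
  rw [Walk.support_cons, Walk.support_concat, List.mem_cons,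
    List.mem_append, List.mem_singleton] at hw
  rcases hw with rfl | hw | rfl
  · exact ⟨hvx.ne', fun _ => .inl rfl⟩
  · exact ⟨(hD w (hp w hw)).1, fun h => ((hD w (hp w hw)).2 h).elim⟩
  · exact ⟨hvy.ne', fun _ => .inr rfl⟩

theorem IsChordal.exists_isClique_neighborSet_inter_of_not_adj [Finite V] (hG : G.IsChordal)
    (s : Set V) {v c : V} (hv : v ∈ s) (hc : c ∈ s) (hcv : c ≠ v) (hvc : ¬ G.Adj v c) :
    ∃ z ∈ s, z ≠ v ∧ ¬ G.Adj v z ∧ G.IsClique (G.neighborSet z ∩ s) := by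
  induction s using WellFoundedLT.induction generalizing v c with
  | _ s ih =>
  set D : Set V := {u | u ∈ s ∧ u ≠ v ∧ ¬ G.Adj v u}
  set C := G.componentIn D c
  set s' : Set V := {x | x ∈ s ∧ (x ∈ C ∨ ∃ u ∈ C, G.Adj u x)}
  have hCs : ∀ u ∈ C, u ∈ s ∧ u ≠ v ∧ ¬ G.Adj v u := fun u hu =>
    (componentIn_subset hu : u ∈ D)
  have hcC : c ∈ C := self_mem_componentIn ⟨hc, hcv, hvc⟩
  have hs's : s' ⊂ s := by
    refine ⟨fun x hx => hx.1, fun h => ?_⟩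
    rcases (h hv).2 with hvC | ⟨u, hu, huv⟩
    · exact (hCs v hvC).2.1 rfl
    · exact (hCs u hu).2.2 huv.symm
  have hnbr : ∀ z ∈ C, G.neighborSet z ∩ s' = G.neighborSet z ∩ s := fun z hz =>
    (Set.inter_subset_inter_right _ fun x hx => hx.1).antisymm
      fun x hx => ⟨hx.1, hx.2, .inr ⟨z, hz, hx.1⟩⟩
  have hboundary : ∀ x ∈ s', ∀ y ∈ s', x ≠ y → G.Adj x y ∨ x ∈ C ∨ y ∈ C := by
    intro x hx y hy hxy
    by_contra! h
    obtain ⟨u₁, hu₁, hu₁x⟩ := hx.2.resolve_left h.2.1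
    obtain ⟨u₂, hu₂, hu₂y⟩ := hy.2.resolve_left h.2.2
    exact h.1 (hG.adj_of_adj_componentIn (fun w hw => hw.2)
      (adj_of_adj_of_notMem_componentIn hu₁ hx.1 h.2.1 hu₁x)
      (adj_of_adj_of_notMem_componentIn hu₂ hy.1 h.2.2 hu₂y) hxy hu₁ hu₂
      hu₁x.symm hu₂y.symm)
  have hlift : ∀ z ∈ C, G.IsClique (G.neighborSet z ∩ s') →
      ∃ z ∈ s, z ≠ v ∧ ¬ G.Adj v z ∧ G.IsClique (G.neighborSet z ∩ s) :=
    fun z hz hcl => ⟨z, (hCs z hz).1, (hCs z hz).2.1, (hCs z hz).2.2, hnbr z hz ▸ hcl⟩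
  by_cases hcl : G.IsClique s'
  · exact hlift c hcC (hcl.subset Set.inter_subset_right)
  obtain ⟨u, hu, w, hw, huw, hnuw⟩ : ∃ u ∈ s', ∃ w ∈ s', u ≠ w ∧ ¬ G.Adj u w := by
    simpa [IsClique, Set.Pairwise] using hcl
  obtain ⟨z₁, hz₁, hz₁u, hnuz₁, hz₁cl⟩ := ih s' hs's hu hw huw.symm hnuw
  obtain ⟨z₂, hz₂, hz₂z₁, hnz₁z₂, hz₂cl⟩ :=
    ih s' hs's hz₁ hu hz₁u.symm fun h => hnuz₁ h.symm
  rcases hboundary z₁ hz₁ z₂ hz₂ hz₂z₁.symm with h | h | h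
  · exact (hnz₁z₂ h).elim
  · exact hlift z₁ h hz₁cl
  · exact hlift z₂ h hz₂cl

theorem IsChordal.exists_isClique_neighborSet_inter [Finite V] (hG : G.IsChordal)
    {s : Set V} (hs : s.Nonempty) : ∃ z ∈ s, G.IsClique (G.neighborSet z ∩ s) := by
  by_cases hcl : G.IsClique s
  · exact ⟨hs.some, hs.some_mem, hcl.subset Set.inter_subset_right⟩
  obtain ⟨v, hv, c, hc, hvc, hnvc⟩ : ∃ v ∈ s, ∃ c ∈ s, v ≠ c ∧ ¬ G.Adj v c := by
    simpa [IsClique, Set.Pairwise] using hcl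
  obtain ⟨z, hz, -, -, hzcl⟩ :=
    hG.exists_isClique_neighborSet_inter_of_not_adj s hv hc hvc.symm hnvc
  exact ⟨z, hz, hzcl⟩

theorem IsChordal.exists_isClique_neighborSet [Finite V] [Nonempty V] (hG : G.IsChordal) :
    ∃ v, G.IsClique (G.neighborSet v) := by
  obtain ⟨v, -, hv⟩ := hG.exists_isClique_neighborSet_inter Set.univ_nonempty
  exact ⟨v, by simpa using hv⟩

end SimpleGraph

theorem induced_subgraph_of_chordal {V : Type*} [Fintype V]
    (G : SimpleGraph V) (hG : G.IsChordal) (s : Set V) :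
    (G.induce s).IsChordal ∧
      (s.Nonempty → ∃ x : s, (G.induce s).IsClique ((G.induce s).neighborSet x)) := by
  have hs : (G.induce s).IsChordal := hG.comap (SimpleGraph.Embedding.induce s)
  refine ⟨hs, fun hne => ?_⟩
  have : Nonempty s := hne.to_subtype
  exact hs.exists_isClique_neighborSet
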